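/- Let Z(θ₁,θ₂) = 1 − (cos θ₁ + cos θ₂)/2 and a(x) = (2π)⁻² ∫_{(−π,π)²} (1 − cos(x·θ))/Z(θ) dθ for x ∈ ℤ². Then for every fixed x ∈ ℤ², a(y) − a(y−x) → 0 as ‖y‖ → ∞ (y ∈ ℤ², ‖y‖ the Euclidean norm); consequently, for H_x(y) = a(x) + a(y) − a(x−y) one has H_x(y) → a(x) as ‖y‖ → ∞. -/

import Mathlib

/-!
Since `1 - cos t = Re (1 - exp (i t))`, the difference `a(y) - a(y - x)` is `(2π)⁻²` times the real
part of `∫ exp (i y·θ) (exp (-i x·θ) - 1) / Z(θ) dθ` over `(-π, π)²`, the ball of radius `π` for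
the sup norm. There `Z(θ) ≥ ‖θ‖² / π²` and `|exp (-i x·θ) - 1| ≤ |x·θ|`, so the integrand is
`O(‖θ‖⁻¹)`, which is integrable in dimension two, and the Riemann–Lebesgue lemma makes this
Fourier coefficient vanish as `‖y‖ → ∞`. By the symmetry `a(-z) = a(z)`,
`H_x(y) - a(x) = a(y) - a(y - x)`.
-/

open MeasureTheory

/-- The Fourier symbol `Z(θ) = 1 − (cos θ₁ + cos θ₂)/2` of the discrete
Laplacian on `ℤ²` (normalized by the vertex degree). -/
noncomputable def Zsym (θ : ℝ × ℝ) : ℝ := 1 - (Real.cos θ.1 + Real.cos θ.2) / 2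

/-- The pairing `x·θ = x₁θ₁ + x₂θ₂` between `ℤ²` and `ℝ²`. -/
noncomputable def latticeDot (x : ℤ × ℤ) (θ : ℝ × ℝ) : ℝ :=
  (x.1 : ℝ) * θ.1 + (x.2 : ℝ) * θ.2

/-- The potential kernel `a(x) = (2π)⁻² ∫_{(−π,π)²} (1 − cos(x·θ))/Z(θ) dθ`
of the simple random walk on `ℤ²`. -/
noncomputable def potentialKernel (x : ℤ × ℤ) : ℝ :=
  ((2 * Real.pi) ^ 2)⁻¹ *
    ∫ θ in Set.Ioo (-Real.pi) Real.pi ×ˢ Set.Ioo (-Real.pi) Real.pi,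
      (1 - Real.cos (latticeDot x θ)) / Zsym θ

/-- The Green-type function `H_x(y) = a(x) + a(y) − a(x−y)` on `ℤ²`. -/
noncomputable def greenFn (x y : ℤ × ℤ) : ℝ :=
  potentialKernel x + potentialKernel y - potentialKernel (x - y)

/-- The Euclidean norm of a lattice point of `ℤ²`. -/
noncomputable def latticeNorm (x : ℤ × ℤ) : ℝ :=
  Real.sqrt ((x.1 : ℝ) ^ 2 + (x.2 : ℝ) ^ 2)

open Filter Topology Metric Set
open scoped Real FourierTransform

lemma ball_zero_eq_Ioo_prod_Ioo (r : ℝ) : ball (0 : ℝ × ℝ) r = Ioo (-r) r ×ˢ Ioo (-r) r := by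
  rw [← Prod.mk_zero_zero, ← ball_prod_same, Real.ball_eq_Ioo, zero_sub, zero_add]

lemma latticeDot_add (y z : ℤ × ℤ) (θ : ℝ × ℝ) :
    latticeDot (y + z) θ = latticeDot y θ + latticeDot z θ := by
  simp only [latticeDot, Prod.fst_add, Prod.snd_add, Int.cast_add]
  ring

lemma latticeDot_neg (z : ℤ × ℤ) (θ : ℝ × ℝ) : latticeDot (-z) θ = -latticeDot z θ := by
  simp only [latticeDot, Prod.fst_neg, Prod.snd_neg, Int.cast_neg]
  ring

lemma abs_latticeDot_le (z : ℤ × ℤ) (θ : ℝ × ℝ) :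
    |latticeDot z θ| ≤ (|(z.1 : ℝ)| + |(z.2 : ℝ)|) * ‖θ‖ :=
  calc |latticeDot z θ| ≤ |(z.1 : ℝ)| * |θ.1| + |(z.2 : ℝ)| * |θ.2| :=
        (abs_add_le _ _).trans_eq (by rw [abs_mul, abs_mul])
    _ ≤ (|(z.1 : ℝ)| + |(z.2 : ℝ)|) * ‖θ‖ := by
        rw [add_mul]
        gcongr
        exacts [norm_fst_le θ, norm_snd_le θ]

lemma potentialKernel_neg (z : ℤ × ℤ) : potentialKernel (-z) = potentialKernel z := by
  simp only [potentialKernel, latticeDot_neg, Real.cos_neg]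

lemma greenFn_sub_potentialKernel (x y : ℤ × ℤ) :
    greenFn x y - potentialKernel x = potentialKernel y - potentialKernel (y - x) := by
  rw [greenFn, ← neg_sub y x, potentialKernel_neg]
  ring

lemma sq_norm_div_pi_sq_le_Zsym {θ : ℝ × ℝ} (hθ : ‖θ‖ ≤ π) : ‖θ‖ ^ 2 / π ^ 2 ≤ Zsym θ := by
  have sq_div_le : ∀ {s t : ℝ}, |s| ≤ π → s ^ 2 / π ^ 2 ≤ 1 - (Real.cos s + Real.cos t) / 2 := by
    intro s t hs
    have := Real.cos_le_one_sub_mul_cos_sq hs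
    have : s ^ 2 / π ^ 2 = 2 / π ^ 2 * s ^ 2 / 2 := by ring
    linarith [Real.cos_le_one t]
  have h1 : |θ.1| ≤ π := (norm_fst_le θ).trans hθ
  have h2 : |θ.2| ≤ π := (norm_snd_le θ).trans hθ
  rcases max_choice ‖θ.1‖ ‖θ.2‖ with h | h <;>
    rw [Prod.norm_def, h, Real.norm_eq_abs, sq_abs, Zsym]
  · exact sq_div_le h1
  · rw [add_comm (Real.cos θ.1)]
    exact sq_div_le h2

noncomputable def potentialIntegrand (z : ℤ × ℤ) (θ : ℝ × ℝ) : ℂ :=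
  (Complex.exp (latticeDot z θ * Complex.I) - 1) / Zsym θ

lemma norm_potentialIntegrand_le (z : ℤ × ℤ) {θ : ℝ × ℝ} (hθ : ‖θ‖ ≤ π) :
    ‖potentialIntegrand z θ‖ ≤ π ^ 2 * (|(z.1 : ℝ)| + |(z.2 : ℝ)|) * ‖θ‖ ^ (-1 : ℝ) := by
  -- at `θ = 0` both sides vanish: `Zsym 0 = 0` and `0 ^ (-1 : ℝ) = 0`
  rcases eq_or_ne θ 0 with rfl | hθ0
  · simp [potentialIntegrand, Zsym]
  have hnorm : 0 < ‖θ‖ := norm_pos_iff.2 hθ0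
  have hZ := sq_norm_div_pi_sq_le_Zsym hθ
  have hZpos : 0 < Zsym θ := lt_of_lt_of_le (by positivity) hZ
  rw [potentialIntegrand, norm_div, Complex.norm_real, Real.norm_of_nonneg hZpos.le,
    Real.rpow_neg_one, mul_comm _ Complex.I]
  calc ‖Complex.exp (Complex.I * latticeDot z θ) - 1‖ / Zsym θ
      ≤ (|(z.1 : ℝ)| + |(z.2 : ℝ)|) * ‖θ‖ / (‖θ‖ ^ 2 / π ^ 2) :=
        div_le_div₀ (by positivity)
          (Real.norm_exp_I_mul_ofReal_sub_one_le.trans (abs_latticeDot_le z θ)) (by positivity) hZ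
    _ = π ^ 2 * (|(z.1 : ℝ)| + |(z.2 : ℝ)|) * ‖θ‖⁻¹ := by
        field_simp

lemma measurable_potentialIntegrand (z : ℤ × ℤ) : Measurable (potentialIntegrand z) := by
  unfold potentialIntegrand latticeDot Zsym
  fun_prop

lemma integrableOn_potentialIntegrand (z : ℤ × ℤ) :
    IntegrableOn (potentialIntegrand z) (ball 0 π) :=
  integrableOn_ball_of_norm_le_rpow (by simp) (by simp)
    (ae_restrict_of_forall_mem measurableSet_ball fun _ hθ =>
      norm_potentialIntegrand_le z (mem_ball_zero_iff.1 hθ).le)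
    (measurable_potentialIntegrand z).aestronglyMeasurable

lemma potentialKernel_eq_neg_re (z : ℤ × ℤ) :
    potentialKernel z = -(((2 * π) ^ 2)⁻¹ * (∫ θ in ball 0 π, potentialIntegrand z θ).re) := by
  rw [← RCLike.re_to_complex, ← integral_re (integrableOn_potentialIntegrand z), ← mul_neg,
    ← integral_neg, ball_zero_eq_Ioo_prod_Ioo, potentialKernel]
  congr 2 with θ
  simp only [potentialIntegrand, RCLike.re_to_complex, Complex.div_ofReal_re, Complex.sub_re,
    Complex.exp_ofReal_mul_I_re, Complex.one_re]
  ring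

lemma potentialKernel_sub_potentialKernel_sub (x y : ℤ × ℤ) :
    potentialKernel y - potentialKernel (y - x) = ((2 * π) ^ 2)⁻¹ * (∫ θ in ball 0 π,
      Complex.exp (latticeDot y θ * Complex.I) * potentialIntegrand (-x) θ).re := by
  have hshift : ∀ θ, Complex.exp (latticeDot y θ * Complex.I) * potentialIntegrand (-x) θ =
      potentialIntegrand (y - x) θ - potentialIntegrand y θ := by
    intro θ
    simp only [potentialIntegrand, sub_eq_add_neg y x, latticeDot_add, Complex.ofReal_add,
      add_mul, Complex.exp_add, div_eq_mul_inv]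
    ring
  simp_rw [hshift, potentialKernel_eq_neg_re,
    integral_sub (integrableOn_potentialIntegrand _) (integrableOn_potentialIntegrand _),
    Complex.sub_re]
  ring

noncomputable def latticeFunctional (y : ℤ × ℤ) : StrongDual ℝ (ℝ × ℝ) :=
  (y.1 : ℝ) • ContinuousLinearMap.fst ℝ ℝ ℝ + (y.2 : ℝ) • ContinuousLinearMap.snd ℝ ℝ ℝ

@[simp]
lemma latticeFunctional_apply (y : ℤ × ℤ) (θ : ℝ × ℝ) : latticeFunctional y θ = latticeDot y θ :=
  rfl

lemma latticeNorm_le_two_mul_norm_latticeFunctional (y : ℤ × ℤ) :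
    latticeNorm y ≤ 2 * ‖latticeFunctional y‖ := by
  have h1 : |(y.1 : ℝ)| ≤ ‖latticeFunctional y‖ := by
    simpa [latticeDot] using (latticeFunctional y).le_opNorm (1, 0)
  have h2 : |(y.2 : ℝ)| ≤ ‖latticeFunctional y‖ := by
    simpa [latticeDot] using (latticeFunctional y).le_opNorm (0, 1)
  have h : latticeNorm y ≤ |(y.1 : ℝ)| + |(y.2 : ℝ)| := by
    refine Real.sqrt_le_iff.2 ⟨by positivity, ?_⟩
    nlinarith [sq_abs (y.1 : ℝ), sq_abs (y.2 : ℝ), abs_nonneg (y.1 : ℝ), abs_nonneg (y.2 : ℝ)]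
  linarith

lemma tendsto_norm_latticeFunctional :
    Tendsto (fun y => ‖latticeFunctional y‖) (comap latticeNorm atTop) atTop :=
  tendsto_atTop_mono
    (fun y => (div_le_iff₀' two_pos).2 (latticeNorm_le_two_mul_norm_latticeFunctional y))
    (tendsto_comap.atTop_div_const two_pos)

theorem tendsto_setIntegral_exp_latticeDot_mul (f : ℝ × ℝ → ℂ) {s : Set (ℝ × ℝ)}
    (hs : MeasurableSet s) :
    Tendsto (fun y => ∫ θ in s, Complex.exp (latticeDot y θ * Complex.I) * f θ)
      (comap latticeNorm atTop) (𝓝 0) := by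
  -- `𝐞 t = exp (2π i t)`, whence the scaling by `-(2π)⁻¹`
  have hw : Tendsto (fun y => -(2 * π)⁻¹ • latticeFunctional y) (comap latticeNorm atTop)
      (cocompact _) := by
    rw [← cobounded_eq_cocompact, ← tendsto_norm_atTop_iff_cobounded]
    simp_rw [norm_smul, norm_neg, norm_inv, Real.norm_of_nonneg Real.two_pi_pos.le]
    exact tendsto_norm_latticeFunctional.const_mul_atTop (inv_pos.2 Real.two_pi_pos)
  convert (tendsto_integral_exp_smul_cocompact (s.indicator f) volume).comp hw using 1
  ext y
  rw [← integral_indicator hs]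
  congr 1 with θ
  rw [Circle.smul_def, Real.fourierChar_apply, smul_eq_mul, indicator_mul_right]
  congr 3
  simp [field]

lemma tendsto_comap_latticeNorm_atTop_nhds_iff {f : ℤ × ℤ → ℝ} {c : ℝ} :
    Tendsto f (comap latticeNorm atTop) (𝓝 c) ↔
      ∀ ε : ℝ, 0 < ε → ∃ R : ℝ, ∀ y, R ≤ latticeNorm y → |f y - c| < ε := by
  simp [(atTop_basis.comap latticeNorm).tendsto_iff Metric.nhds_basis_ball, Real.dist_eq]

theorem tendsto_potentialKernel_sub_potentialKernel_sub (x : ℤ × ℤ) :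
    Tendsto (fun y => potentialKernel y - potentialKernel (y - x)) (comap latticeNorm atTop)
      (𝓝 0) := by
  simp_rw [potentialKernel_sub_potentialKernel_sub x]
  simpa using ((Complex.continuous_re.tendsto 0).comp
    (tendsto_setIntegral_exp_latticeDot_mul (potentialIntegrand (-x)) measurableSet_ball)).const_mul
      ((2 * π) ^ 2)⁻¹

/-- Formula (2.Green.asymp): for fixed `x`, `a(y) − a(y−x) → 0` as
`‖y‖ → ∞`; consequently the Green-type function `H_x(y)` tends to the finite
limit `a(x)` at infinity. -/
theorem stmt16 (x : ℤ × ℤ) :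
    (∀ ε : ℝ, 0 < ε → ∃ R : ℝ,
      ∀ y : ℤ × ℤ, R ≤ latticeNorm y →
        |potentialKernel y - potentialKernel (y - x)| < ε) ∧
    (∀ ε : ℝ, 0 < ε → ∃ R : ℝ,
      ∀ y : ℤ × ℤ, R ≤ latticeNorm y →
        |greenFn x y - potentialKernel x| < ε) := by
  have h := tendsto_comap_latticeNorm_atTop_nhds_iff.1
    (tendsto_potentialKernel_sub_potentialKernel_sub x)
  exact ⟨by simpa using h, by simpa [greenFn_sub_potentialKernel] using h⟩
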